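/- arXiv:2102.01440 — 3 statements merged into one kernel-verified Lean document; each statement's English description precedes it below -/
import Mathlib

section
/- Let J = (V, D, H) be a weakly winning justification, S a set of nodes closed under incoming edges of D (if v ∈ S and (w, v) ∈ D then w ∈ S), and H_f an arbitrary function mapping nodes of S to players. Then J' = J[v : ∅, H_f(v) | v ∈ S] is weakly winning, and J' contains no cycle that is not already a cycle of J. -/
attribute [local instance] Classical.propDecidable

noncomputable section

/-- A parity game: an edge relation `E`, an owner function, a priority
function; every node has at least one outgoing edge. -/
structure ParityGame (V : Type*) where
  E : V → V → Prop
  owner : V → Fin 2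
  pr : V → ℕ
  exists_succ : ∀ v, ∃ w, E v w

namespace ParityGame

variable {V : Type*}

/-- An infinite sequence of nodes following the relation `R`. -/
def IsInfPath (R : V → V → Prop) (π : ℕ → V) : Prop :=
  ∀ i, R (π i) (π (i + 1))

/-- `ρ 0, …, ρ n` is a finite sequence of nodes following `R`. -/
def IsFinPath (R : V → V → Prop) (ρ : ℕ → V) (n : ℕ) : Prop :=
  ∀ i < n, R (ρ i) (ρ (i + 1))

/-- A cycle following `R`: a nonempty finite path ending in its starting node. -/
def IsCycle (R : V → V → Prop) (ρ : ℕ → V) (n : ℕ) : Prop :=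
  0 < n ∧ IsFinPath R ρ n ∧ ρ n = ρ 0

/-- `w` is reachable from `v` following `R` (in zero or more steps). -/
def Reaches (R : V → V → Prop) (v w : V) : Prop :=
  Relation.ReflTransGen R v w

open Fin.NatCast in
/-- The infinite play `π` is won by player `α`: the highest priority
occurring infinitely often in the play has parity `α`. -/
def InfWonBy (G : ParityGame V) (π : ℕ → V) (α : Fin 2) : Prop :=
  ∃ p : ℕ, {i | G.pr (π i) = p}.Infinite ∧
    (∀ q : ℕ, {i | G.pr (π i) = q}.Infinite → q ≤ p) ∧ (p : Fin 2) = α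

/-- A play is consistent with a (partial, memoryless) strategy given as a set
of edges: whenever the play is at a node where the strategy selects an edge,
the play follows that edge. -/
def Consistent (σ : V → V → Prop) (π : ℕ → V) : Prop :=
  ∀ i u, σ (π i) u → π (i + 1) = u

/-- Consistency of a finite play `ρ 0, …, ρ n` with a strategy. -/
def ConsistentFin (σ : V → V → Prop) (ρ : ℕ → V) (n : ℕ) : Prop :=
  ∀ i < n, ∀ u, σ (ρ i) u → ρ (i + 1) = u

open Fin.NatCast in
/-- The default hypothesis: each node is won by the parity of its priority. -/
def Hd (G : ParityGame V) (v : V) : Fin 2 := (G.pr v : Fin 2)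

/-- `dj` is a direct justification for player `α` to win node `v`: a set
containing exactly one outgoing edge of `v` if `α` owns `v`, and all outgoing
edges of `v` otherwise. -/
def IsDJ (G : ParityGame V) (v : V) (α : Fin 2) (dj : Set (V × V)) : Prop :=
  (G.owner v = α → ∃ w, G.E v w ∧ dj = {(v, w)}) ∧
  (G.owner v ≠ α → dj = {p | p.1 = v ∧ G.E v p.2})

/-- `dj` wins `v` for `α` under hypothesis `H`. -/
def WinsDJ (G : ParityGame V) (H : V → Fin 2) (v : V) (α : Fin 2)
    (dj : Set (V × V)) : Prop :=
  G.IsDJ v α dj ∧ ∀ p ∈ dj, H p.2 = α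

/-- The parity game obtained from `G` and the parameter function `P` by
replacing, in every parameter `v`, the outgoing edges of `v` by the self-loop
`(v, v)` and the priority of `v` by its assigned winner `P v`. -/
def paramGame (G : ParityGame V) (P : V → Option (Fin 2)) : ParityGame V where
  E := fun v w => if P v = none then G.E v w else w = v
  owner := G.owner
  pr := fun v => (P v).elim (G.pr v) Fin.val
  exists_succ := fun v => by
    by_cases h : P v = none
    · obtain ⟨w, hw⟩ := G.exists_succ v
      exact ⟨w, by simp [h, hw]⟩
    · exact ⟨v, by simp [h]⟩

/-- A justification for `G`: a subgraph `D` together with a hypothesis `H`. -/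
structure Justification (G : ParityGame V) where
  D : V → V → Prop
  H : V → Fin 2

variable {G : ParityGame V}

namespace Justification

/-- `v` is justified in `J`: it has an outgoing edge in `D`. -/
def Justified (J : Justification G) (v : V) : Prop := ∃ w, J.D v w

/-- The set of outgoing edges of `v` in `D`. -/
def outEdges (J : Justification G) (v : V) : Set (V × V) :=
  {p | p.1 = v ∧ J.D v p.2}

/-- `J` is weakly winning: the outgoing edges of every justified node `v`
form a direct justification winning `v` for `H v` under `H`. -/
def WeaklyWinning (J : Justification G) : Prop :=
  ∀ v, J.Justified v → G.WinsDJ J.H v (J.H v) (J.outEdges v)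

/-- `J` is winning: weakly winning, and every infinite path in `D` is a play
of `G` won by the hypothetical winner of its nodes. -/
def Winning (J : Justification G) : Prop :=
  J.WeaklyWinning ∧
    ∀ π : ℕ → V, IsInfPath J.D π → G.InfWonBy π (J.H (π 0))

/-- The parameter function `P_J`: the restriction of `H` to the unjustified
nodes of `J`. -/
def param (J : Justification G) (v : V) : Option (Fin 2) :=
  if J.Justified v then none else some (J.H v)

/-- The strategy `σ_{J,α}`: the set of edges `(v, w) ∈ D` with
`O v = H v = α`. -/
def strat (J : Justification G) (α : Fin 2) : V → V → Prop :=
  fun v w => J.D v w ∧ G.owner v = α ∧ J.H v = α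

/-- `Par_J v`: the parameters (unjustified nodes) reachable from `v` in `D`. -/
def Par (J : Justification G) (v : V) : Set V :=
  {w | Reaches J.D v w ∧ ¬ J.Justified w}

/-- The justification level of `v`: the minimal priority of a parameter
reachable from `v`, and `⊤` (`+∞`) if there is none. -/
def jl (J : Justification G) (v : V) : ℕ∞ :=
  sInf ((fun w => (G.pr w : ℕ∞)) '' J.Par v)

/-- The justification level of a direct justification: the minimum of the
justification levels of the targets of its edges. -/
def jlDJ (J : Justification G) (dj : Set (V × V)) : ℕ∞ :=
  sInf ((fun p : V × V => J.jl p.2) '' dj)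

/-- `J` is safe: winning, unjustified nodes have their default winner as
hypothesis, and the justification level of every node is at least its
priority. -/
def Safe (J : Justification G) : Prop :=
  J.Winning ∧ (∀ v, ¬ J.Justified v → J.H v = G.Hd v) ∧
    ∀ v, (G.pr v : ℕ∞) ≤ J.jl v

/-- `J[v : dj, α]`: replace the outgoing `D`-edges of `v` by `dj` and set
`H v := α`. -/
def update (J : Justification G) (v : V) (dj : Set (V × V)) (α : Fin 2) :
    Justification G where
  D := fun x y => if x = v then (x, y) ∈ dj else J.D x y
  H := fun x => if x = v then α else J.H x

/-- `J[v : ∅, Hf v | v ∈ S]`: remove the direct justification of every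
`v ∈ S` and set `H v := Hf v`. -/
def resetAll (J : Justification G) (S : Set V) (Hf : V → Fin 2) :
    Justification G where
  D := fun x y => if x ∈ S then False else J.D x y
  H := fun x => if x ∈ S then Hf x else J.H x

/-- `s_i(J)`: the number of justified nodes of justification level `i`. -/
def size (J : Justification G) (i : ℕ∞) : ℕ :=
  {v | J.Justified v ∧ J.jl v = i}.ncard

end Justification

/-- The preconditions of the operation `Justify(J, v, dj)`. -/
def Executable (G : ParityGame V) (J : Justification G) (v : V)
    (dj : Set (V × V)) : Prop :=
  J.Safe ∧ (∃ α, G.WinsDJ J.H v α dj) ∧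
    (if J.Justified v then J.jl v < J.jlDJ dj else J.jl v ≤ J.jlDJ dj)

/-- The operation `Justify(J, v, dj)`, where `α` is the player winning `v`
by `dj`: if `H v = α` this is `J[v : dj, α]`; otherwise all nodes reaching
`v` in `D` are reset to their default winner and then `v` gets `dj`. -/
def justify (G : ParityGame V) (J : Justification G) (v : V)
    (dj : Set (V × V)) (α : Fin 2) : Justification G :=
  if J.H v = α then J.update v dj α
  else (J.resetAll {w | Reaches J.D w v} G.Hd).update v dj α

/-- The empty justification `(V, ∅, H_d)`. -/
def Justification.empty (G : ParityGame V) : Justification G :=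
  ⟨fun _ _ => False, G.Hd⟩

theorem IsCycle.mono {R R' : V → V → Prop} (hRR' : ∀ x y, R x y → R' x y)
    {ρ : ℕ → V} {n : ℕ} (h : IsCycle R ρ n) : IsCycle R' ρ n :=
  ⟨h.1, fun i hi => hRR' _ _ (h.2.1 i hi), h.2.2⟩

namespace Justification

variable {J : Justification G} {S : Set V} {Hf : V → Fin 2}

theorem resetAll_D_iff {x y : V} : (J.resetAll S Hf).D x y ↔ x ∉ S ∧ J.D x y := by
  by_cases hx : x ∈ S <;> simp [resetAll, hx]

theorem resetAll_H_of_notMem {x : V} (hx : x ∉ S) : (J.resetAll S Hf).H x = J.H x := by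
  simp [resetAll, hx]

theorem outEdges_resetAll_of_notMem {v : V} (hv : v ∉ S) :
    (J.resetAll S Hf).outEdges v = J.outEdges v := by
  ext ⟨x, y⟩
  simp only [outEdges, Set.mem_ofPred_eq, resetAll_D_iff, hv, not_false_eq_true, true_and]

theorem WeaklyWinning.resetAll (hJ : J.WeaklyWinning)
    (hS : ∀ v w, v ∈ S → J.D w v → w ∈ S) : (J.resetAll S Hf).WeaklyWinning := by
  rintro v ⟨w, hvw⟩
  obtain ⟨hvS, hvw⟩ := resetAll_D_iff.1 hvw
  obtain ⟨hdj, hwin⟩ := hJ v ⟨w, hvw⟩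
  rw [outEdges_resetAll_of_notMem hvS, resetAll_H_of_notMem hvS]
  refine ⟨hdj, fun p hp => ?_⟩
  have hpS : p.2 ∉ S := fun h => hvS (hS p.2 v h hp.2)
  rw [resetAll_H_of_notMem hpS]
  exact hwin p hp

end Justification

theorem stmt_7_general {V : Type*} {G : ParityGame V}
    (J : Justification G) (hJ : J.WeaklyWinning) (S : Set V)
    (hS : ∀ v w, v ∈ S → J.D w v → w ∈ S) (Hf : V → Fin 2) :
    (J.resetAll S Hf).WeaklyWinning ∧
    ∀ (ρ : ℕ → V) (n : ℕ), IsCycle (J.resetAll S Hf).D ρ n →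
      IsCycle J.D ρ n :=
  ⟨hJ.resetAll hS, fun _ _ =>
    IsCycle.mono fun _ _ h => (Justification.resetAll_D_iff.1 h).2⟩

/-- if `J` is weakly winning, `S` is closed under incoming
`D`-edges and `Hf` maps nodes of `S` to players, then
`J[v : ∅, Hf v | v ∈ S]` is weakly winning and has no cycle that is not
already a cycle of `J`. -/
theorem stmt_7 {V : Type*} [Fintype V] {G : ParityGame V}
    (J : Justification G) (hJ : J.WeaklyWinning) (S : Set V)
    (hS : ∀ v w, v ∈ S → J.D w v → w ∈ S) (Hf : V → Fin 2) :
    (J.resetAll S Hf).WeaklyWinning ∧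
    ∀ (ρ : ℕ → V) (n : ℕ), IsCycle (J.resetAll S Hf).D ρ n →
      IsCycle J.D ρ n :=
  stmt_7_general J hJ S hS Hf

end ParityGame

end
end

section
/- Let J = (V, D, H) be a safe justification, v an unjustified node, and dj a direct justification that wins v for the opponent ᾱ of H(v) under H and satisfies jl(dj) ≥ jl(v). Then jl(dj) > Pr(v). -/
attribute [local instance] Classical.propDecidable

noncomputable section

namespace ParityGame

variable {V : Type*}

variable {G : ParityGame V}

theorem _root_.ENat.exists_mem_image_eq_sInf {ι : Type*} {f : ι → ℕ∞} {s : Set ι}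
    (h : sInf (f '' s) ≠ ⊤) : ∃ i ∈ s, f i = sInf (f '' s) := by
  have hne : (f '' s).Nonempty := by
    by_contra hempty
    simp [Set.not_nonempty_iff_eq_empty.mp hempty] at h
  exact csInf_mem hne

namespace Justification

variable (J : Justification G)

theorem jl_le_pr_of_mem_Par {v u : V} (hu : u ∈ J.Par v) : J.jl v ≤ G.pr u :=
  sInf_le ⟨u, hu, rfl⟩

theorem jl_le_pr_of_not_justified {v : V} (hv : ¬ J.Justified v) : J.jl v ≤ G.pr v :=
  J.jl_le_pr_of_mem_Par ⟨.refl, hv⟩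

theorem exists_mem_Par_pr_eq_jl {v : V} (h : J.jl v ≠ ⊤) :
    ∃ u ∈ J.Par v, (G.pr u : ℕ∞) = J.jl v :=
  ENat.exists_mem_image_eq_sInf h

theorem exists_mem_jl_eq_jlDJ {dj : Set (V × V)} (h : J.jlDJ dj ≠ ⊤) :
    ∃ p ∈ dj, J.jl p.2 = J.jlDJ dj :=
  ENat.exists_mem_image_eq_sInf h

variable {J}

theorem WeaklyWinning.H_eq_of_reaches (hJ : J.WeaklyWinning) {x y : V}
    (hxy : Reaches J.D x y) : J.H y = J.H x := by
  induction hxy with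
  | refl => rfl
  | @tail b c _ hbc ih => exact ((hJ b ⟨c, hbc⟩).2 (b, c) ⟨rfl, hbc⟩).trans ih

theorem Safe.H_eq_Hd_of_mem_Par (hJ : J.Safe) {v u : V} (hu : u ∈ J.Par v) :
    J.H v = G.Hd u :=
  (hJ.1.1.H_eq_of_reaches hu.1).symm.trans (hJ.2.1 u hu.2)

end Justification

-- A parameter `u` realising `jl(dj) = Pr v` would have `Hd u = Hd v = H v`, while `H` is
-- constant along `D`-paths and so also `H u = 1 - H v`.
theorem stmt_11_general {V : Type*} {G : ParityGame V}
    (J : Justification G) (hJ : J.Safe) (v : V) (dj : Set (V × V))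
    (hunj : ¬ J.Justified v) (hwin : G.WinsDJ J.H v (1 - J.H v) dj)
    (hlev : J.jl v ≤ J.jlDJ dj) :
    (G.pr v : ℕ∞) < J.jlDJ dj := by
  by_contra! hle
  have hjlv : J.jl v = G.pr v := le_antisymm (J.jl_le_pr_of_not_justified hunj) (hJ.2.2 v)
  obtain ⟨p, hp, hjlp⟩ := J.exists_mem_jl_eq_jlDJ (hle.trans_lt (ENat.natCast_lt_top _)).ne
  have hjlp_eq : J.jl p.2 = G.pr v := hjlp.trans (le_antisymm hle (hjlv ▸ hlev))
  obtain ⟨u, hu, hpru⟩ := J.exists_mem_Par_pr_eq_jl (hjlp_eq ▸ ENat.natCast_ne_top _)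
  have hHd : G.Hd u = G.Hd v := by
    rw [Hd, Hd, ENat.natCast_inj.mp (hpru.trans hjlp_eq)]
  have hH : J.H v = 1 - J.H v := calc
    J.H v = G.Hd u := (hJ.2.1 v hunj).trans hHd.symm
    _ = J.H p.2 := (hJ.H_eq_Hd_of_mem_Par hu).symm
    _ = 1 - J.H v := hwin.2 p hp
  exact (by decide : ∀ a : Fin 2, a ≠ 1 - a) _ hH

/-- if `J` is safe, `v` is unjustified, and `dj` wins `v` for
the opponent of `H v` under `H` with `jl(dj) ≥ jl(v)`, then
`jl(dj) > Pr v`. -/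
theorem stmt_11 {V : Type*} [Fintype V] {G : ParityGame V}
    (J : Justification G) (hJ : J.Safe) (v : V) (dj : Set (V × V))
    (hunj : ¬ J.Justified v) (hwin : G.WinsDJ J.H v (1 - J.H v) dj)
    (hlev : J.jl v ≤ J.jlDJ dj) :
    (G.pr v : ℕ∞) < J.jlDJ dj :=
  stmt_11_general J hJ v dj hunj hwin hlev

end ParityGame

end
end

section
/- Let J be a safe justification for a parity game PG that has at least one unjustified node. Then there exist a node v and a direct justification dj such that Justify(J, v, dj) is executable. In particular, if p is the minimal priority among unjustified nodes, then every unjustified node v with Pr(v) = p is justifiable with some direct justification dj that wins v for some player and has jl(dj) ≥ p. -/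
attribute [local instance] Classical.propDecidable

noncomputable section

namespace ParityGame

variable {V : Type*}

variable {G : ParityGame V}

/-- Either the owner of `v` can move to a node it wins under `H`, or all successors are won by the
opponent under `H`. -/
theorem exists_winsDJ (G : ParityGame V) (H : V → Fin 2) (v : V) :
    ∃ dj α, G.WinsDJ H v α dj := by
  by_cases h : ∃ w, G.E v w ∧ H w = G.owner v
  · obtain ⟨w, hvw, hHw⟩ := h
    refine ⟨{(v, w)}, G.owner v, ⟨fun _ => ⟨w, hvw, rfl⟩, fun hne => absurd rfl hne⟩, ?_⟩
    rintro q rfl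
    exact hHw
  · push Not at h
    have opponent : ∀ a b : Fin 2, a ≠ b → a = b + 1 := by decide
    have ne_add_one : ∀ a : Fin 2, a ≠ a + 1 := by decide
    refine ⟨{q | q.1 = v ∧ G.E v q.2}, G.owner v + 1,
      ⟨fun heq => absurd heq (ne_add_one _), fun _ => rfl⟩, ?_⟩
    rintro ⟨x, y⟩ ⟨rfl, hxy⟩
    exact opponent _ _ (h y hxy)

namespace Justification

variable (J : Justification G)

theorem le_jl_of_forall_not_justified {b : ℕ} (h : ∀ u, ¬ J.Justified u → b ≤ G.pr u) (w : V) :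
    (b : ℕ∞) ≤ J.jl w :=
  le_sInf <| by
    rintro _ ⟨u, ⟨-, hu⟩, rfl⟩
    exact Nat.cast_le.mpr (h u hu)

theorem le_jlDJ_of_forall_not_justified {b : ℕ} (h : ∀ u, ¬ J.Justified u → b ≤ G.pr u)
    (dj : Set (V × V)) : (b : ℕ∞) ≤ J.jlDJ dj :=
  le_sInf <| by
    rintro _ ⟨q, -, rfl⟩
    exact J.le_jl_of_forall_not_justified h q.2

end Justification

/-- Any winning direct justification will do: `jl v ≤ Pr v = p`, while every level is at least `p`
because every parameter has priority at least `p`. -/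
theorem executable_of_isLeast {J : Justification G} (hsafe : J.Safe) {p : ℕ}
    (hp : IsLeast (G.pr '' {v | ¬ J.Justified v}) p) {v : V} (hv : ¬ J.Justified v)
    (hpv : G.pr v = p) :
    ∃ (dj : Set (V × V)) (α : Fin 2), G.WinsDJ J.H v α dj ∧
      (p : ℕ∞) ≤ J.jlDJ dj ∧ Executable G J v dj := by
  obtain ⟨dj, α, hwin⟩ := G.exists_winsDJ J.H v
  have hmin : ∀ u, ¬ J.Justified u → p ≤ G.pr u := fun u hu => hp.2 ⟨u, hu, rfl⟩
  have hjlDJ := J.le_jlDJ_of_forall_not_justified hmin dj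
  refine ⟨dj, α, hwin, hjlDJ, hsafe, ⟨α, hwin⟩, ?_⟩
  rw [if_neg hv]
  exact (J.jl_le_pr_of_not_justified hv).trans (hpv ▸ hjlDJ)

theorem stmt_13_general {V : Type*} {G : ParityGame V}
    (J : Justification G) (hsafe : J.Safe)
    (p : ℕ) (hp : IsLeast (G.pr '' {v | ¬ J.Justified v}) p) :
    (∃ v dj, Executable G J v dj) ∧
    ∀ v, ¬ J.Justified v → G.pr v = p →
      ∃ (dj : Set (V × V)) (α : Fin 2), G.WinsDJ J.H v α dj ∧
        (p : ℕ∞) ≤ J.jlDJ dj ∧ Executable G J v dj := by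
  refine ⟨?_, fun v hv hpv => executable_of_isLeast hsafe hp hv hpv⟩
  obtain ⟨v, hv, hpv⟩ := hp.1
  obtain ⟨dj, -, -, -, hexec⟩ := executable_of_isLeast hsafe hp hv hpv
  exact ⟨v, dj, hexec⟩

/-- if `J` is safe and has an unjustified node, then some node
is justifiable with some direct justification; in particular, if `p` is the
minimal priority among unjustified nodes, every unjustified node of priority
`p` is justifiable with a direct justification that wins it for some player
and has justification level `≥ p`. -/
theorem stmt_13 {V : Type*} [Fintype V] {G : ParityGame V}
    (J : Justification G) (hsafe : J.Safe) (hunj : ∃ v, ¬ J.Justified v)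
    (p : ℕ) (hp : IsLeast (G.pr '' {v | ¬ J.Justified v}) p) :
    (∃ v dj, Executable G J v dj) ∧
    ∀ v, ¬ J.Justified v → G.pr v = p →
      ∃ (dj : Set (V × V)) (α : Fin 2), G.WinsDJ J.H v α dj ∧
        (p : ℕ∞) ≤ J.jlDJ dj ∧ Executable G J v dj :=
  stmt_13_general J hsafe p hp

end ParityGame

end
end
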